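/- Let G be a chordal graph and I ⊆ V(G). Then the graph G′ = G − E(G[I]) obtained by deleting all edges between vertices of I is a perfect graph. -/

import Mathlib

open SimpleGraph

variable {V : Type*}

/-- Number of connected components of a graph. -/
noncomputable def numComponents (G : SimpleGraph V) : ℕ := Nat.card G.ConnectedComponent

/-- A vertex is a cut vertex if its removal increases the number of connected components. -/
def IsCutVertex (G : SimpleGraph V) (v : V) : Prop :=
  numComponents G < numComponents (G.induce {u | u ≠ v})

/-- `T` is a spanning tree of `G`: a subgraph on all vertices of `G` that is a tree. -/
def IsSpanningTree (G T : SimpleGraph V) : Prop := T ≤ G ∧ T.IsTree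

/-- `v` is dominated by `S` in the graph `T`. -/
def DominatedIn (T : SimpleGraph V) (S : Set V) (v : V) : Prop :=
  v ∈ S ∨ ∃ u ∈ S, T.Adj v u

/-- `v` is simultaneously dominated by `S`: dominated in every spanning tree of `G`. -/
def SimDominated (G : SimpleGraph V) (S : Set V) (v : V) : Prop :=
  ∀ T : SimpleGraph V, IsSpanningTree G T → DominatedIn T S v

/-- `S` is a simultaneous dominating set of `G`. -/
def IsSDSet (G : SimpleGraph V) (S : Set V) : Prop := ∀ v, SimDominated G S v

/-- `C` is a vertex cover of `G`. -/
def IsVertexCover (G : SimpleGraph V) (C : Set V) : Prop :=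
  ∀ ⦃u v : V⦄, G.Adj u v → u ∈ C ∨ v ∈ C

/-- A block of `G`: a maximal vertex set inducing a connected subgraph without cut vertices. -/
def IsBlock (G : SimpleGraph V) (B : Set V) : Prop :=
  B.Nonempty ∧ (G.induce B).Connected ∧ (∀ x, ¬ IsCutVertex (G.induce B) x) ∧
    ∀ B' : Set V, B ⊆ B' → (G.induce B').Connected →
      (∀ x, ¬ IsCutVertex (G.induce B') x) → B' = B

/-- 2-connected: connected, at least 3 vertices, no cut vertex. -/
def TwoConnected (G : SimpleGraph V) [Fintype V] : Prop :=
  G.Connected ∧ 3 ≤ Fintype.card V ∧ ∀ v, ¬ IsCutVertex G v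

/-- Colours 1, 0, 0̂. -/
inductive Col : Type
  | one | zero | zhat
deriving DecidableEq

/-- `S` is an `f`-respecting simultaneous dominating set of `G`. -/
def RespSDS (G : SimpleGraph V) (f : V → Col) (S : Set V) : Prop :=
  (∀ v, f v = Col.one → v ∈ S) ∧ ∀ v, f v = Col.zhat → SimDominated G S v

/-- A minimum `f`-respecting simultaneous dominating set. -/
def MinRespSDS (G : SimpleGraph V) (f : V → Col) (S : Set V) : Prop :=
  RespSDS G f S ∧ ∀ S' : Set V, RespSDS G f S' → S.ncard ≤ S'.ncard

/-- A graph is chordal iff it has no induced cycle of length at least 4. -/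
def IsChordal (G : SimpleGraph V) : Prop :=
  ∀ n : ℕ, 4 ≤ n → IsEmpty (SimpleGraph.cycleGraph n ↪g G)

/-- `G − E(G[I])`: delete all edges between vertices of `I`. -/
def removeInside (G : SimpleGraph V) (I : Set V) : SimpleGraph V where
  Adj u w := G.Adj u w ∧ ¬(u ∈ I ∧ w ∈ I)
  symm := ⟨fun u w ⟨h, h'⟩ => ⟨h.symm, fun ⟨a, b⟩ => h' ⟨b, a⟩⟩⟩
  loopless := ⟨fun u h => G.loopless.irrefl u h.1⟩

/-- `G` has an odd hole: an induced cycle of odd length at least 5. -/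
def HasOddHole (G : SimpleGraph V) : Prop :=
  ∃ n : ℕ, 5 ≤ n ∧ Odd n ∧ Nonempty (SimpleGraph.cycleGraph n ↪g G)

/-- Perfect graph, via the strong perfect graph theorem characterization:
no odd hole and no odd antihole (an odd antihole of `G` is an odd hole of `Gᶜ`). -/
def IsPerfect (G : SimpleGraph V) : Prop := ¬ HasOddHole G ∧ ¬ HasOddHole Gᶜ

/-!
An edge of `G` missing from `G′ = removeInside G I` joins two vertices of `I`.

*Holes.* No two consecutive vertices of a hole of `G′` lie both in `I`, so an odd hole has two
consecutive vertices `u, v` outside `I`; in `G` these have no neighbours on the hole other than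
their neighbours along it. But in a chordal graph, of any two consecutive vertices of a cycle of
length at least four one is incident to a chord: shortcutting chords that avoid both vertices
shrinks the cycle until it is induced.

*Antiholes.* The antihole on five vertices is a hole. On `n ≥ 7` vertices `h 0, …, h (n - 1)`,
if some consecutive pair `h x, h (x + 1)` is not an edge of `G`, the four-cycles
`h x, h (x + k), h (x + 1), h (x + k + 1)` of `G` force `h (x + k), h (x + k + 1) ∈ I` for
`k = 3, 4`, although `h (x + 3) h (x + 5)` is an edge of `G′`. Otherwise every consecutive pair is
an edge of `G` but not of `G′`, so all `h i` lie in `I`, although `h 0 h 2` is an edge of `G′`.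
-/

open Fin.NatCast

lemma Nat.modEq_add_one_iff_of_lt {n a b : ℕ} (ha : a < n) (hb : b < n) :
    a ≡ b + 1 [MOD n] ↔ a = b + 1 ∨ (a = 0 ∧ b + 1 = n) := by
  unfold Nat.ModEq
  rw [Nat.mod_eq_of_lt ha]
  rcases (show b + 1 ≤ n by omega).lt_or_eq with h | h
  · rw [Nat.mod_eq_of_lt h]; omega
  · rw [h, Nat.mod_self]; omega

lemma Fin.natCast_eq_natCast_iff_modEq {n : ℕ} [NeZero n] {a b : ℕ} :
    (a : Fin n) = (b : Fin n) ↔ a ≡ b [MOD n] := by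
  rw [Fin.ext_iff, Fin.val_natCast, Fin.val_natCast]; rfl

lemma Fin.natCast_ne_natCast_of_lt {n : ℕ} [NeZero n] {a b : ℕ} (hab : a < b)
    (hba : b < a + n) :
    (a : Fin n) ≠ (b : Fin n) := by
  rw [Ne, Fin.natCast_eq_natCast_iff_modEq]
  exact fun h => by linarith [h.add_le_of_lt hab]

lemma cycleGraph_adj_natCast {n : ℕ} [NeZero n] (hn : 2 ≤ n) {a b : ℕ} :
    (cycleGraph n).Adj a b ↔ a ≡ b + 1 [MOD n] ∨ b ≡ a + 1 [MOD n] := by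
  obtain ⟨k, rfl⟩ : ∃ k, n = k + 2 := ⟨n - 2, by omega⟩
  simp only [cycleGraph_adj, sub_eq_iff_eq_add, add_comm (1 : Fin _), ← Nat.cast_succ,
    Fin.natCast_eq_natCast_iff_modEq]

lemma cycleGraph_not_adj_natCast {n : ℕ} [NeZero n] {a b : ℕ} (hab : a + 2 ≤ b)
    (hba : b + 2 ≤ a + n) : ¬(cycleGraph n).Adj a b := by
  rw [cycleGraph_adj_natCast (by omega)]
  rintro (h | h)
  · linarith [h.add_le_of_lt (by omega)]
  · linarith [h.symm.add_le_of_lt (by omega)]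

lemma cycleGraph_compl_adj_natCast {n : ℕ} [NeZero n] {a b : ℕ} (hab : a + 2 ≤ b)
    (hba : b + 2 ≤ a + n) : (cycleGraph n)ᶜ.Adj a b :=
  ⟨Fin.natCast_ne_natCast_of_lt (by omega) (by omega), cycleGraph_not_adj_natCast hab hba⟩

lemma cycleGraph_adj_val {n : ℕ} (hn : 2 ≤ n) {u v : Fin n} :
    (cycleGraph n).Adj u v ↔
      u.val = v.val + 1 ∨ v.val = u.val + 1 ∨ (u.val = 0 ∧ v.val + 1 = n) ∨
        (v.val = 0 ∧ u.val + 1 = n) := by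
  have : NeZero n := ⟨by omega⟩
  rw [← Fin.cast_val_eq_self u, ← Fin.cast_val_eq_self v, cycleGraph_adj_natCast hn,
    Nat.modEq_add_one_iff_of_lt u.isLt v.isLt, Nat.modEq_add_one_iff_of_lt v.isLt u.isLt]
  simp only [Fin.val_natCast, Nat.mod_eq_of_lt u.isLt, Nat.mod_eq_of_lt v.isLt]
  tauto

structure IsCycleSeq (G : SimpleGraph V) (c : ℕ → V) (m : ℕ) : Prop where
  injOn : Set.InjOn c (Set.Iio m)
  closed : c m = c 0
  adj : ∀ i < m, G.Adj (c i) (c (i + 1))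

namespace IsCycleSeq

variable {W : Type*} {G : SimpleGraph V} {c : ℕ → V} {m : ℕ}

lemma mono {H : SimpleGraph V} (hc : IsCycleSeq G c m) (hGH : G ≤ H) : IsCycleSeq H c m :=
  ⟨hc.injOn, hc.closed, fun i hi => hGH (hc.adj i hi)⟩

lemma map {H : SimpleGraph W} (hc : IsCycleSeq G c m) (f : G ↪g H) : IsCycleSeq H (f ∘ c) m :=
  ⟨f.injective.comp_injOn hc.injOn, congrArg f hc.closed,
    fun i hi => f.map_adj_iff.mpr (hc.adj i hi)⟩

lemma shortcut (hc : IsCycleSeq G c m) {i j : ℕ} (hij : i + 2 ≤ j) (hjm : j < m)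
    (hchord : G.Adj (c i) (c j)) :
    IsCycleSeq G (fun k => c (if k ≤ i then k else k + (j - i - 1))) (m - (j - i - 1)) := by
  refine ⟨?_, ?_, fun k hk => ?_⟩
  · intro k hk l hl hkl
    have := hc.injOn (x₁ := if k ≤ i then k else k + (j - i - 1))
      (x₂ := if l ≤ i then l else l + (j - i - 1))
      (by simp only [Set.mem_Iio] at hk ⊢; split_ifs <;> omega)
      (by simp only [Set.mem_Iio] at hl ⊢; split_ifs <;> omega) hkl
    split_ifs at this <;> omega
  · simp only [if_neg (show ¬m - (j - i - 1) ≤ i by omega),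
      show m - (j - i - 1) + (j - i - 1) = m by omega, hc.closed, if_pos (Nat.zero_le i)]
  · rcases lt_trichotomy k i with hki | rfl | hki
    · rw [if_pos hki.le, if_pos (show k + 1 ≤ i by omega)]
      exact hc.adj k (by omega)
    · simpa [show k + 1 + (j - k - 1) = j by omega] using hchord
    · rw [if_neg (show ¬k ≤ i by omega), if_neg (show ¬k + 1 ≤ i by omega),
        show k + 1 + (j - i - 1) = k + (j - i - 1) + 1 by omega]
      exact hc.adj _ (by omega)

end IsCycleSeq

lemma isCycleSeq_cycleGraph {n : ℕ} [NeZero n] (hn : 2 ≤ n) (r : ℕ) :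
    IsCycleSeq (cycleGraph n) (fun k => ((r + k : ℕ) : Fin n)) n := by
  refine ⟨fun k hk l hl hkl => ?_, ?_, fun k _ => ?_⟩
  · simp only [Fin.natCast_eq_natCast_iff_modEq] at hkl
    exact (Nat.ModEq.add_left_cancel' r hkl).eq_of_lt_of_lt hk hl
  · simp only [Fin.natCast_eq_natCast_iff_modEq]
    exact (Nat.modEq_zero_iff_dvd.mpr dvd_rfl).add_left r
  · rw [cycleGraph_adj_natCast hn]
    exact Or.inr rfl

namespace IsChordal

variable {G : SimpleGraph V} {c : ℕ → V} {m : ℕ}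

lemma exists_chord (hG : IsChordal G) (hc : IsCycleSeq G c m) (hm : 4 ≤ m) :
    ∃ i j, i + 2 ≤ j ∧ j < m ∧ ¬(i = 0 ∧ j + 1 = m) ∧ G.Adj (c i) (c j) := by
  by_contra hno
  refine (hG m hm).false
    ⟨⟨fun k => c k.val, fun k l h => Fin.ext (hc.injOn k.isLt l.isLt h)⟩, ?_⟩
  intro u v
  change G.Adj (c u) (c v) ↔ _
  rw [cycleGraph_adj_val (by omega)]
  have hlast : G.Adj (c (m - 1)) (c 0) := by
    simpa [Nat.sub_add_cancel (show 1 ≤ m by omega), hc.closed] using hc.adj (m - 1) (by omega)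
  constructor
  · intro h
    have hne : u.val ≠ v.val := fun huv => h.ne (congrArg c huv)
    by_contra hcycle
    rcases hne.lt_or_gt with huv | huv
    · exact hno ⟨u, v, by omega, v.isLt, by omega, h⟩
    · exact hno ⟨v, u, by omega, u.isLt, by omega, h.symm⟩
  · rintro (h | h | ⟨h0, h1⟩ | ⟨h0, h1⟩)
    · rw [h]; exact (hc.adj _ (by omega)).symm
    · rw [h]; exact hc.adj _ u.isLt
    · rw [h0, show v.val = m - 1 by omega]; exact hlast.symm
    · rw [h0, show u.val = m - 1 by omega]; exact hlast

lemma exists_chord_at_zero_or_one (hG : IsChordal G) (hc : IsCycleSeq G c m) (hm : 4 ≤ m) :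
    (∃ j, 2 ≤ j ∧ j + 2 ≤ m ∧ G.Adj (c 0) (c j)) ∨
      ∃ j, 3 ≤ j ∧ j < m ∧ G.Adj (c 1) (c j) := by
  induction m using Nat.strong_induction_on generalizing c with
  | _ m ih =>
  obtain ⟨i, j, hij, hjm, hwrap, hchord⟩ := hG.exists_chord hc hm
  obtain rfl | rfl | hi : i = 0 ∨ i = 1 ∨ 2 ≤ i := by omega
  · exact Or.inl ⟨j, by omega, by omega, hchord⟩
  · exact Or.inr ⟨j, by omega, hjm, hchord⟩
  -- a chord avoiding `c 0` and `c 1` cuts off a shorter cycle through both of them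
  · rcases ih _ (by omega) (hc.shortcut hij hjm hchord) (by omega) with
      ⟨k, hk, hkm, hadj⟩ | ⟨k, hk, hkm, hadj⟩
    · refine Or.inl ⟨_, ?_, ?_, hadj⟩ <;> split_ifs <;> omega
    · rw [if_pos (by omega : 1 ≤ i)] at hadj
      refine Or.inr ⟨_, ?_, ?_, hadj⟩ <;> split_ifs <;> omega

lemma adj_or_adj_of_four_cycle (hG : IsChordal G) {w x y z : V} (hwx : G.Adj w x)
    (hxy : G.Adj x y) (hyz : G.Adj y z) (hzw : G.Adj z w) (hwy : w ≠ y) (hxz : x ≠ z) :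
    G.Adj w y ∨ G.Adj x z := by
  have hc : IsCycleSeq G (fun k => ![w, x, y, z] (k : Fin 4)) 4 := by
    refine ⟨fun k hk l hl h => ?_, rfl, fun k hk => ?_⟩
    · simp only [Set.mem_Iio] at hk hl
      interval_cases k <;> interval_cases l <;>
        simp_all [hwx.ne, hxy.ne, hyz.ne, hzw.ne, hwx.ne', hxy.ne', hyz.ne', hzw.ne']
    · interval_cases k <;> simpa
  obtain ⟨i, j, hij, hj, hwrap, hchord⟩ := hG.exists_chord hc le_rfl
  obtain ⟨rfl, rfl⟩ | ⟨rfl, rfl⟩ : i = 0 ∧ j = 2 ∨ i = 1 ∧ j = 3 := by omega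
  · exact Or.inl hchord
  · exact Or.inr hchord

end IsChordal

lemma removeInside_le (G : SimpleGraph V) (I : Set V) : removeInside G I ≤ G := fun _ _ h => h.1

lemma exists_consecutive_notMem_of_odd {c : ℕ → V} {m : ℕ} {I : Set V} (hm : Odd m)
    (hclosed : c m = c 0) (hI : ∀ k < m, ¬(c k ∈ I ∧ c (k + 1) ∈ I)) :
    ∃ k < m, c k ∉ I ∧ c (k + 1) ∉ I := by
  by_contra! hall
  have alternate : ∀ k ≤ m, (c k ∈ I ↔ (c 0 ∈ I ↔ Even k)) := by
    intro k hk
    induction k with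
    | zero => simp
    | succ k ih =>
      have := ih (by omega)
      have := hI k (by omega)
      have := hall k (by omega)
      rw [Nat.even_add_one]
      tauto
  have := alternate m le_rfl
  rw [hclosed, iff_false_intro (Nat.not_even_iff_odd.mpr hm)] at this
  tauto

def cycleGraphFiveEmbeddingCompl : cycleGraph 5 ↪g (cycleGraph 5)ᶜ :=
  ⟨⟨fun i => 2 * i, by decide⟩, by decide⟩

theorem not_hasOddHole_removeInside {G : SimpleGraph V} (hG : IsChordal G) (I : Set V) :
    ¬HasOddHole (removeInside G I) := by
  rintro ⟨n, hn5, hodd, ⟨e⟩⟩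
  have : NeZero n := ⟨by omega⟩
  have hcycle (r : ℕ) : IsCycleSeq (removeInside G I) (fun k => e ((r + k : ℕ) : Fin n)) n :=
    (isCycleSeq_cycleGraph (by omega) r).map e
  have no_chord (a b : ℕ) (ha : e a ∉ I) (hab : a + 2 ≤ b) (hba : b + 2 ≤ a + n) :
      ¬G.Adj (e a) (e b) := fun hadj =>
    cycleGraph_not_adj_natCast hab hba (e.map_adj_iff.mp ⟨hadj, fun h => ha h.1⟩)
  obtain ⟨r, -, hr, hr1⟩ := exists_consecutive_notMem_of_odd hodd (hcycle 0).closed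
    fun k hk => ((hcycle 0).adj k hk).2
  simp only [zero_add] at hr hr1
  rcases hG.exists_chord_at_zero_or_one ((hcycle r).mono (removeInside_le G I)) (by omega) with
    ⟨j, hj, hjn, hadj⟩ | ⟨j, hj, hjn, hadj⟩
  · exact no_chord r (r + j) hr (by omega) (by omega) hadj
  · exact no_chord (r + 1) (r + j) hr1 (by omega) (by omega) hadj

theorem not_hasOddHole_compl_removeInside {G : SimpleGraph V} (hG : IsChordal G) (I : Set V) :
    ¬HasOddHole (removeInside G I)ᶜ := by
  rintro ⟨n, hn5, hodd, ⟨e⟩⟩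
  obtain rfl | hn7 : n = 5 ∨ 7 ≤ n := by obtain ⟨k, rfl⟩ := hodd; omega
  · exact not_hasOddHole_removeInside hG I ⟨5, le_rfl, by decide,
      ⟨(compl_compl (removeInside G I) ▸ Embedding.complEquiv e).comp
        cycleGraphFiveEmbeddingCompl⟩⟩
  have : NeZero n := ⟨by omega⟩
  set h : ℕ → V := fun k => e (k : Fin n)
  have h_ne (a b : ℕ) (hab : a < b) (hba : b < a + n) : h a ≠ h b :=
    e.injective.ne (Fin.natCast_ne_natCast_of_lt hab hba)
  have far (a b : ℕ) (hab : a + 2 ≤ b) (hba : b + 2 ≤ a + n) :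
      G.Adj (h a) (h b) ∧ ¬(h a ∈ I ∧ h b ∈ I) := by
    have : (removeInside G I)ᶜᶜ.Adj (h a) (h b) :=
      (Embedding.complEquiv e).map_adj_iff.mpr (cycleGraph_compl_adj_natCast hab hba)
    rwa [compl_compl] at this
  have near (a : ℕ) (hadj : G.Adj (h a) (h (a + 1))) : h a ∈ I ∧ h (a + 1) ∈ I := by
    by_contra hI
    have hcycle : (cycleGraph n).Adj a (a + 1 : ℕ) :=
      (cycleGraph_adj_natCast (by omega)).mpr (Or.inr rfl)
    exact (e.map_adj_iff.mpr hcycle).2 ⟨hadj, hI⟩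
  by_cases hcons : ∀ a, G.Adj (h a) (h (a + 1))
  · exact (far 0 2 le_rfl (by omega)).2 ⟨(near 0 (hcons 0)).1, (near 1 (hcons 1)).2⟩
  push Not at hcons
  obtain ⟨x, hx⟩ := hcons
  have hI (k : ℕ) (hk : 3 ≤ k) (hkn : k + 3 ≤ n) :
      h (x + k) ∈ I ∧ h (x + k + 1) ∈ I := by
    refine near _ ((hG.adj_or_adj_of_four_cycle (far x (x + k) ?_ ?_).1
      (far (x + 1) (x + k) ?_ ?_).1.symm (far (x + 1) (x + k + 1) ?_ ?_).1
      (far x (x + k + 1) ?_ ?_).1.symm (h_ne _ _ ?_ ?_) (h_ne _ _ ?_ ?_)).resolve_left hx) <;>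
      omega
  exact (far (x + 3) (x + 5) (by omega) (by omega)).2
    ⟨(hI 3 le_rfl (by omega)).1, (hI 4 (by omega) (by omega)).2⟩

/-- If `G` is chordal and `I ⊆ V(G)`, then `G′ = G − E(G[I])` is perfect. -/
theorem stmt14 (G : SimpleGraph V) (hG : IsChordal G) (I : Set V) :
    IsPerfect (removeInside G I) :=
  ⟨not_hasOddHole_removeInside hG I, not_hasOddHole_compl_removeInside hG I⟩
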